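/- arXiv:1506.05913 — 6 statements merged into one kernel-verified Lean document; each statement's English description precedes it below -/
import Mathlib

section
/- There exists a constant c > 0 such that for every n ∈ ℕ with n ≥ 1 and every vector of reals p_1, …, p_n with 0 < p_i < 1 for all i, one has T_LO(p_1,…,p_n) ≥ c·n². -/
/-!
Write `q i = p i * ∏_{j<i} (1 - p j)` for the probability that bit `i` is the first one to flip.
These probabilities telescope, `∑ q i = 1 - ∏ (1 - p j) ≤ 1`, and `T_LO = ∑ 1 / (2 q i)`.
By Cauchy–Schwarz, `n² ≤ (∑ q i) (∑ 1 / q i) ≤ ∑ 1 / q i`, so `T_LO ≥ n² / 2`.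
-/

/-- `TLO n p = ∑_{i=1}^n 1/(2 p_i ∏_{j=1}^{i-1} (1 - p_j))`, the exact expected run time
of the (1+1) EA with bit flip probabilities `p 1, …, p n` on the `n`-bit LeadingOnes
function (Böttcher–Doerr–Neumann). -/
noncomputable def TLO (n : ℕ) (p : ℕ → ℝ) : ℝ :=
  ∑ i ∈ Finset.Icc 1 n, 1 / (2 * p i * ∏ j ∈ Finset.Ico 1 i, (1 - p j))

open Finset

theorem sum_Icc_mul_prod_Ico_one_sub {R : Type*} [CommRing R] (p : ℕ → R) (n : ℕ) :
    ∑ i ∈ Icc 1 n, p i * ∏ j ∈ Ico 1 i, (1 - p j) = 1 - ∏ j ∈ Icc 1 n, (1 - p j) := by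
  induction n with
  | zero => simp
  | succ n ih =>
    rw [sum_Icc_succ_top (by omega), prod_Icc_succ_top (by omega), ih,
      Ico_add_one_right_eq_Icc]
    ring

theorem card_sq_le_sum_inv_of_sum_le_one {ι R : Type*} [Field R] [LinearOrder R]
    [IsStrictOrderedRing R] {s : Finset ι} {a : ι → R} (ha : ∀ i ∈ s, 0 < a i)
    (hsum : ∑ i ∈ s, a i ≤ 1) : (#s : R) ^ 2 ≤ ∑ i ∈ s, 1 / a i := by
  rcases s.eq_empty_or_nonempty with rfl | hs
  · simp
  have cauchy_schwarz : (#s : R) ^ 2 / ∑ i ∈ s, a i ≤ ∑ i ∈ s, 1 / a i := by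
    simpa using sq_sum_div_le_sum_sq_div s (fun _ ↦ (1 : R)) ha
  exact (le_div_self (by positivity) (sum_pos ha hs) hsum).trans cauchy_schwarz

theorem prod_Ico_one_sub_pos {p : ℕ → ℝ} {n : ℕ} (hp : ∀ i ∈ Icc 1 n, 0 < p i ∧ p i < 1)
    {i : ℕ} (hi : i ≤ n + 1) : 0 < ∏ j ∈ Ico 1 i, (1 - p j) := by
  refine prod_pos fun j hj ↦ ?_
  have hj' := mem_Ico.mp hj
  linarith [(hp j (mem_Icc.mpr ⟨hj'.1, by omega⟩)).2]

/-- Lemma 3.1 (analytic core): `T_LO(p_1,…,p_n) = Ω(n²)` for any mutation probabilities. -/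
theorem stmt0 :
    ∃ c : ℝ, 0 < c ∧ ∀ n : ℕ, 1 ≤ n → ∀ p : ℕ → ℝ,
      (∀ i ∈ Finset.Icc 1 n, 0 < p i ∧ p i < 1) →
      c * (n : ℝ) ^ 2 ≤ TLO n p := by
  refine ⟨1 / 2, by norm_num, fun n _ p hp ↦ ?_⟩
  set q : ℕ → ℝ := fun i ↦ p i * ∏ j ∈ Ico 1 i, (1 - p j)
  have hq_pos : ∀ i ∈ Icc 1 n, 0 < q i := fun i hi ↦
    mul_pos (hp i hi).1 (prod_Ico_one_sub_pos hp (by linarith [(mem_Icc.mp hi).2]))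
  have hq_sum : ∑ i ∈ Icc 1 n, q i ≤ 1 := by
    rw [sum_Icc_mul_prod_Ico_one_sub, ← Ico_add_one_right_eq_Icc]
    linarith [prod_Ico_one_sub_pos hp le_rfl]
  have hTLO : TLO n p = 1 / 2 * ∑ i ∈ Icc 1 n, 1 / q i := by
    rw [TLO, mul_sum]
    exact sum_congr rfl fun i _ ↦ by rw [mul_assoc, ← one_div_mul_one_div]
  have := card_sq_le_sum_inv_of_sum_le_one hq_pos hq_sum
  rw [Nat.card_Icc, Nat.add_sub_cancel] at this
  rw [hTLO]
  linarith
end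

section
/- Let n ≥ 2, let p_1,…,p_n be reals with 0 < p_i < 1 for all i, and let 1 ≤ k < n satisfy p_k > p_{k+1}. Let q_1,…,q_n be obtained from p by swapping the entries in positions k and k+1 (q_k = p_{k+1}, q_{k+1} = p_k, q_i = p_i otherwise). Then T_LO(p_1,…,p_n) > T_LO(q_1,…,q_n). -/
/-!
Swapping `p_k` and `p_{k+1}` leaves every summand of `T_LO` other than the `k`-th and the
`(k+1)`-st unchanged: summands before `k` do not see the two entries, and summands after `k+1`
contain both factors `1 - p_k` and `1 - p_{k+1}`. With `P = ∏_{j<k} (1 - p_j)`, `a = p_k` and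
`b = p_{k+1}` the two remaining summands, multiplied by `2P`, compare as
`1/b + 1/(a(1-b)) < 1/a + 1/(b(1-a))`, i.e. `(a-b)/(ab) < (a-b)/(ab(1-a)(1-b))`, which holds
because `b < a` and `(1-a)(1-b) < 1`.
-/

open Finset

noncomputable def leadingOnesTerm (p : ℕ → ℝ) (i : ℕ) : ℝ :=
  1 / (2 * p i * ∏ j ∈ Ico 1 i, (1 - p j))

lemma TLO_eq_sum_leadingOnesTerm (n : ℕ) (p : ℕ → ℝ) :
    TLO n p = ∑ i ∈ Icc 1 n, leadingOnesTerm p i :=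
  rfl

lemma prod_Ico_one_comp_swap {M : Type*} [CommMonoid M] {k i : ℕ} (hk : 1 ≤ k) (hi : i ≠ k + 1)
    (f : ℕ → M) :
    ∏ j ∈ Ico 1 i, f (Equiv.swap k (k + 1) j) = ∏ j ∈ Ico 1 i, f j := by
  rcases le_or_gt i k with hik | hik
  · refine prod_congr rfl fun j hj => ?_
    have hj : j < k := (mem_Ico.1 hj).2.trans_le hik
    rw [Equiv.swap_apply_of_ne_of_ne hj.ne (by omega)]
  · refine Equiv.Perm.prod_comp _ _ _ fun j hj => ?_
    have : j = k ∨ j = k + 1 := by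
      by_contra! h
      exact hj (Equiv.swap_apply_of_ne_of_ne h.1 h.2)
    simp only [coe_Ico, Set.mem_Ico]
    omega

lemma leadingOnesTerm_comp_swap {k i : ℕ} (hk : 1 ≤ k) (hik : i ≠ k) (hik₁ : i ≠ k + 1)
    (p : ℕ → ℝ) : leadingOnesTerm (p ∘ Equiv.swap k (k + 1)) i = leadingOnesTerm p i := by
  simp only [leadingOnesTerm, Function.comp_apply, Equiv.swap_apply_of_ne_of_ne hik hik₁,
    prod_Ico_one_comp_swap hk hik₁ (fun j => 1 - p j)]

lemma one_div_add_one_div_lt_one_div_add_one_div {a b P : ℝ} (hb : 0 < b) (hba : b < a) (ha : a < 1) (hP : 0 < P) :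
    1 / (2 * b * P) + 1 / (2 * a * (P * (1 - b))) <
      1 / (2 * a * P) + 1 / (2 * b * (P * (1 - a))) := by
  have ha₀ : 0 < a := hb.trans hba
  have h1a : 0 < 1 - a := by linarith
  have h1b : 0 < 1 - b := by linarith
  have hgap : 1 / (2 * a * P) + 1 / (2 * b * (P * (1 - a))) -
      (1 / (2 * b * P) + 1 / (2 * a * (P * (1 - b)))) =
        (a - b) * (a + b - a * b) / (2 * a * b * (1 - a) * (1 - b) * P) := by
    field_simp
    ring
  have hab : 0 < a + b - a * b := by nlinarith
  have : 0 < (a - b) * (a + b - a * b) / (2 * a * b * (1 - a) * (1 - b) * P) :=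
    div_pos (mul_pos (sub_pos.2 hba) hab) (by positivity)
  linarith

lemma leadingOnesTerm_pair_comp_swap_lt {k : ℕ} (hk : 1 ≤ k) {p : ℕ → ℝ}
    (hP : 0 < ∏ j ∈ Ico 1 k, (1 - p j)) (hpk₁ : 0 < p (k + 1)) (hswap : p (k + 1) < p k)
    (hpk : p k < 1) :
    leadingOnesTerm (p ∘ Equiv.swap k (k + 1)) k +
        leadingOnesTerm (p ∘ Equiv.swap k (k + 1)) (k + 1) <
      leadingOnesTerm p k + leadingOnesTerm p (k + 1) := by
  have hprefix := prod_Ico_one_comp_swap hk (by omega : k ≠ k + 1) (fun j => 1 - p j)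
  simp only [leadingOnesTerm, Function.comp_apply, prod_Ico_succ_top hk, hprefix,
    Equiv.swap_apply_left, Equiv.swap_apply_right]
  exact one_div_add_one_div_lt_one_div_add_one_div hpk₁ hswap hpk hP

theorem stmt1_general (n : ℕ) (p : ℕ → ℝ)
    (hp : ∀ i ∈ Finset.Icc 1 n, 0 < p i ∧ p i < 1)
    (k : ℕ) (hk1 : 1 ≤ k) (hkn : k < n) (hswap : p (k + 1) < p k)
    (q : ℕ → ℝ)
    (hq : q = fun i => if i = k then p (k + 1) else if i = k + 1 then p k else p i) :
    TLO n q < TLO n p := by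
  obtain rfl : q = p ∘ Equiv.swap k (k + 1) := by
    subst hq
    funext i
    simp only [Function.comp_apply, Equiv.swap_apply_def]
    split_ifs <;> simp_all
  have hpair : {k, k + 1} ⊆ Icc 1 n := by
    intro i hi
    simp only [mem_insert, mem_singleton] at hi
    simp only [mem_Icc]
    omega
  have hP : 0 < ∏ j ∈ Ico 1 k, (1 - p j) :=
    prod_pos fun j hj => sub_pos.2 (hp j (by simp only [mem_Icc, mem_Ico] at hj ⊢; omega)).2
  have hoff : ∑ i ∈ Icc 1 n \ {k, k + 1}, leadingOnesTerm (p ∘ Equiv.swap k (k + 1)) i =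
      ∑ i ∈ Icc 1 n \ {k, k + 1}, leadingOnesTerm p i := by
    refine sum_congr rfl fun i hi => ?_
    simp only [mem_sdiff, mem_insert, mem_singleton, not_or] at hi
    exact leadingOnesTerm_comp_swap hk1 hi.2.1 hi.2.2 p
  rw [TLO_eq_sum_leadingOnesTerm, TLO_eq_sum_leadingOnesTerm, ← sum_sdiff hpair,
    ← sum_sdiff hpair (f := leadingOnesTerm p), hoff, sum_pair (by omega), sum_pair (by omega)]
  exact add_lt_add_right (leadingOnesTerm_pair_comp_swap_lt hk1 hP
    (hp (k + 1) (hpair (by simp))).1 hswap (hp k (hpair (by simp))).2) _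

/-- Exchange argument from the proof of Lemma 3.1: swapping a strictly out-of-order
adjacent pair `p_k > p_{k+1}` strictly decreases `T_LO`. -/
theorem stmt1 (n : ℕ) (hn : 2 ≤ n) (p : ℕ → ℝ)
    (hp : ∀ i ∈ Finset.Icc 1 n, 0 < p i ∧ p i < 1)
    (k : ℕ) (hk1 : 1 ≤ k) (hkn : k < n) (hswap : p (k + 1) < p k)
    (q : ℕ → ℝ)
    (hq : q = fun i => if i = k then p (k + 1) else if i = k + 1 then p k else p i) :
    TLO n q < TLO n p :=
  stmt1_general n p hp k hk1 hkn hswap q hq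
end

section
/- There exists a constant C > 0 such that for all reals q with 0 < q < 1/2: ∑_{n=1}^{∞} q(1−q)^{n−1} · (ln n + 1)/((q/2)(1 − q/2)^n) ≤ C · q^{−1} · ln(1/q); in particular the series converges. -/
/-!
After factoring out `2 / (1 - q/2)`, the `m`-th term is `(log (m+1) + 1) rᵐ` with
`r = (1 - q) / (1 - q/2)`. The tangent-line bound `log x ≤ x - 1` at `x = (1 - r)(m + 1)` gives
`log (m+1) + 1 ≤ (1 - r)(m + 1) + log (1 - r)⁻¹`, so the series is dominated by an arithmetico-geometric
series with sum `(1 + log (1 - r)⁻¹) / (1 - r)`. Since `1 - r = q / (2 - q)`, the prefactor and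
`(1 - r)⁻¹` combine to exactly `4 / q`, and `1 + log ((2 - q) / q) ≤ 4 log (1/q)` for `q < 1/2`.
-/

open Real

lemma hasSum_succ_mul_geometric {𝕜 : Type*} [NormedField 𝕜] [CompleteSpace 𝕜] {r : 𝕜}
    (hr : ‖r‖ < 1) : HasSum (fun m : ℕ => ((m : 𝕜) + 1) * r ^ m) (1 / (1 - r) ^ 2) := by
  simpa using hasSum_choose_mul_geometric_of_norm_lt_one 1 hr

lemma log_succ_add_one_le (m : ℕ) {c : ℝ} (hc : 0 < c) :
    log (m + 1) + 1 ≤ c * (m + 1) + log c⁻¹ := by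
  have hm : (0 : ℝ) < m + 1 := Nat.cast_add_one_pos m
  have h := log_le_sub_one_of_pos (mul_pos hc hm)
  rw [log_mul hc.ne' hm.ne'] at h
  rw [log_inv]
  linarith

section LogGeometric

variable {r : ℝ}

lemma hasSum_log_succ_majorant (h0 : 0 ≤ r) (h1 : r < 1) :
    HasSum (fun m : ℕ => ((1 - r) * (m + 1) + log (1 - r)⁻¹) * r ^ m)
      ((1 + log (1 - r)⁻¹) / (1 - r)) := by
  have h1r : 1 - r ≠ 0 := (sub_pos.2 h1).ne'
  have hgeom := hasSum_geometric_of_lt_one h0 h1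
  have hsucc := hasSum_succ_mul_geometric (r := r) (by rwa [norm_of_nonneg h0])
  have hsum := (hsucc.mul_left (1 - r)).add (hgeom.mul_left (log (1 - r)⁻¹))
  have hval : (1 - r) * (1 / (1 - r) ^ 2) + log (1 - r)⁻¹ * (1 - r)⁻¹
      = (1 + log (1 - r)⁻¹) / (1 - r) := by
    field_simp
  rw [hval] at hsum
  exact hsum.congr_fun fun m => by ring

lemma log_succ_add_one_mul_pow_le (h0 : 0 ≤ r) (h1 : r < 1) (m : ℕ) :
    (log (m + 1) + 1) * r ^ m ≤ ((1 - r) * (m + 1) + log (1 - r)⁻¹) * r ^ m :=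
  mul_le_mul_of_nonneg_right (log_succ_add_one_le m (sub_pos.2 h1)) (pow_nonneg h0 m)

lemma log_succ_add_one_mul_pow_nonneg (h0 : 0 ≤ r) (m : ℕ) :
    0 ≤ (log (m + 1) + 1) * r ^ m := by
  have : 0 ≤ log (m + 1) := log_nonneg (by simp)
  positivity

lemma summable_log_succ_add_one_mul_geometric (h0 : 0 ≤ r) (h1 : r < 1) :
    Summable (fun m : ℕ => (log (m + 1) + 1) * r ^ m) :=
  (hasSum_log_succ_majorant h0 h1).summable.of_nonneg_of_le
    (log_succ_add_one_mul_pow_nonneg h0) (log_succ_add_one_mul_pow_le h0 h1)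

lemma tsum_log_succ_add_one_mul_geometric_le (h0 : 0 ≤ r) (h1 : r < 1) :
    ∑' m : ℕ, (log (m + 1) + 1) * r ^ m ≤ (1 + log (1 - r)⁻¹) / (1 - r) :=
  hasSum_le (log_succ_add_one_mul_pow_le h0 h1)
    (summable_log_succ_add_one_mul_geometric h0 h1).hasSum (hasSum_log_succ_majorant h0 h1)

end LogGeometric

lemma geometric_weight_mul_runtime_bound_eq {q : ℝ} (hq : q ≠ 0) (hq2 : q ≠ 2) (m : ℕ) :
    q * (1 - q) ^ m * (log (m + 1) + 1) / ((q / 2) * (1 - q / 2) ^ (m + 1))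
      = 2 / (1 - q / 2) * ((log (m + 1) + 1) * ((1 - q) / (1 - q / 2)) ^ m) := by
  have h2 : 1 - q / 2 ≠ 0 := by
    intro h
    exact hq2 (by linarith)
  rw [div_pow, pow_succ]
  field_simp

lemma one_add_log_le_four_mul_log_inv {q : ℝ} (hq : 0 < q) (hq2 : q < 1 / 2) :
    1 + log ((2 - q) / q) ≤ 4 * log (1 / q) := by
  have hsplit : log (2 / q) = log 2 + log (1 / q) := by
    rw [← log_mul two_ne_zero (by positivity), mul_one_div]
  have hmono : log ((2 - q) / q) ≤ log (2 / q) :=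
    log_le_log (div_pos (by linarith) hq) (by gcongr; linarith)
  have hlog2 : log 2 ≤ log (1 / q) :=
    log_le_log two_pos (by rw [le_div_iff₀ hq]; linarith)
  linarith [log_two_gt_d9]

/-- Geometric-distribution case of Theorem 3.8: the `Geo(q)`-average
`∑_{n=1}^∞ q(1−q)^{n−1} (ln n + 1)/((q/2)(1 − q/2)^n)` converges and is
`O(q⁻¹ log q⁻¹)`. (The sum over `n ≥ 1` is written with the index shift `n = m + 1`.) -/
theorem stmt5 :
    ∃ C : ℝ, 0 < C ∧ ∀ q : ℝ, 0 < q → q < 1 / 2 →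
      Summable (fun m : ℕ =>
        q * (1 - q) ^ m * (Real.log (m + 1) + 1) / ((q / 2) * (1 - q / 2) ^ (m + 1))) ∧
      (∑' m : ℕ,
        q * (1 - q) ^ m * (Real.log (m + 1) + 1) / ((q / 2) * (1 - q / 2) ^ (m + 1)))
        ≤ C * q⁻¹ * Real.log (1 / q) := by
  refine ⟨16, by norm_num, fun q hq hq2 => ?_⟩
  set r := (1 - q) / (1 - q / 2) with hr
  have h2 : 0 < 1 - q / 2 := by linarith
  have h2q : 2 - q ≠ 0 := by linarith
  have hr0 : 0 ≤ r := div_nonneg (by linarith) h2.le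
  have hr1 : r < 1 := by rw [hr, div_lt_one h2]; linarith
  have h1r : 1 - r = q / (2 - q) := by
    rw [hr]
    field_simp
    ring
  simp only [geometric_weight_mul_runtime_bound_eq hq.ne' (by linarith : q ≠ 2)]
  refine ⟨(summable_log_succ_add_one_mul_geometric hr0 hr1).mul_left _, ?_⟩
  rw [tsum_mul_left]
  calc 2 / (1 - q / 2) * ∑' m : ℕ, (log (m + 1) + 1) * r ^ m
      ≤ 2 / (1 - q / 2) * ((1 + log (1 - r)⁻¹) / (1 - r)) := by
        gcongr
        exact tsum_log_succ_add_one_mul_geometric_le hr0 hr1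
    _ = 4 / q * (1 + log ((2 - q) / q)) := by
        rw [h1r, inv_div]
        field_simp [hq.ne']
        ring
    _ ≤ 4 / q * (4 * log (1 / q)) := by
        gcongr
        exact one_add_log_le_four_mul_log_inv hq hq2
    _ = 16 * q⁻¹ * log (1 / q) := by ring
end

section
/- There exists a constant C > 0 such that for all integers N ≥ 3 and all reals q with 1/N ≤ q ≤ 1/2: (1 − q)^{N/2 − 1} · (ln N + 1) ≤ C · ln(1/q), where (1−q)^{N/2−1} denotes a real power. -/
/-- The bound on the truncation term from the proof of Theorem 3.8:
`(1 − q)^{N/2 − 1} (ln N + 1) ≤ C ln(1/q)` for `1/N ≤ q ≤ 1/2`, using real powers. -/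
theorem stmt6 :
    ∃ C : ℝ, 0 < C ∧ ∀ N : ℕ, 3 ≤ N → ∀ q : ℝ, 1 / (N : ℝ) ≤ q → q ≤ 1 / 2 →
      (1 - q) ^ ((N : ℝ) / 2 - 1) * (Real.log N + 1) ≤ C * Real.log (1 / q) := by
  refine ⟨10000, by norm_num, ?_⟩
  intro N hN q hq1 hq2
  have hN3 : (3:ℝ) ≤ (N:ℝ) := by exact_mod_cast hN
  have hNpos : (0:ℝ) < N := by linarith
  have hq0 : 0 < q := lt_of_lt_of_le (by positivity) hq1
  have h1q : 0 < 1 - q := by linarith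
  have hlog2 : Real.log 2 ≤ Real.log (1/q) := by
    apply Real.log_le_log (by norm_num)
    rw [le_div_iff₀ hq0]; linarith
  have hlog2pos : (0.6931471803 : ℝ) < Real.log 2 := Real.log_two_gt_d9
  have hlogq0 : 0 < Real.log (1/q) := by linarith
  have hexp0 : (0:ℝ) ≤ (N:ℝ)/2 - 1 := by linarith
  have hlogN1 : 1 ≤ Real.log N := by
    rw [Real.le_log_iff_exp_le hNpos]
    have := Real.exp_one_lt_d9
    linarith
  by_cases hcase : q*q ≤ 1/(N:ℝ)
  · have hpow1 : (1-q)^((N:ℝ)/2-1) ≤ 1 :=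
      Real.rpow_le_one h1q.le (by linarith) hexp0
    have hNle : (N:ℝ) ≤ 1/(q*q) := by
      rw [le_div_iff₀ (by positivity)]
      rw [le_div_iff₀ hNpos] at hcase
      nlinarith
    have hlogN_le : Real.log N ≤ 2 * Real.log (1/q) := by
      have h := Real.log_le_log hNpos hNle
      rw [one_div, Real.log_inv, Real.log_mul hq0.ne' hq0.ne'] at h
      rw [one_div, Real.log_inv]
      linarith
    have hpownn : (0:ℝ) ≤ (1-q)^((N:ℝ)/2-1) := Real.rpow_nonneg h1q.le _
    nlinarith [mul_le_mul_of_nonneg_right hpow1 (by linarith : (0:ℝ) ≤ Real.log N + 1)]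
  · push_neg at hcase
    have hqN : Real.sqrt N ≤ q * N := by
      have h1 : (N:ℝ) ≤ (q*N)^2 := by
        rw [div_lt_iff₀ hNpos] at hcase
        nlinarith
      calc Real.sqrt N ≤ Real.sqrt ((q*N)^2) := Real.sqrt_le_sqrt h1
        _ = q*N := Real.sqrt_sq (by positivity)
    have key : (1-q)^((N:ℝ)/2-1) ≤ Real.exp (-(q * ((N:ℝ)/2 - 1))) := by
      have h1 : 1 - q ≤ Real.exp (-q) := by linarith [Real.add_one_le_exp (-q)]
      calc (1-q)^((N:ℝ)/2-1) ≤ (Real.exp (-q))^((N:ℝ)/2-1) :=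
            Real.rpow_le_rpow h1q.le h1 hexp0
        _ = Real.exp (-q * ((N:ℝ)/2-1)) := (Real.exp_mul _ _).symm
        _ = Real.exp (-(q * ((N:ℝ)/2-1))) := by ring_nf
    have harg : Real.sqrt N / 2 - 1/2 ≤ q * ((N:ℝ)/2 - 1) := by nlinarith
    have hexpbound : Real.exp (-(q*((N:ℝ)/2-1))) ≤
        Real.exp (1/2) * Real.exp (-(Real.sqrt N/2)) := by
      rw [← Real.exp_add]
      exact Real.exp_le_exp.2 (by linarith)
    have hs0 : (0:ℝ) ≤ Real.sqrt N := Real.sqrt_nonneg _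
    have hsq : Real.sqrt N ^ 2 = (N:ℝ) := Real.sq_sqrt hNpos.le
    have hgrow : (Real.sqrt N / 8 + 1)^4 ≤ Real.exp (Real.sqrt N / 2) := by
      have h8 : Real.sqrt N / 8 + 1 ≤ Real.exp (Real.sqrt N / 8) :=
        Real.add_one_le_exp _
      have he4 : Real.exp (Real.sqrt N/8)^4 = Real.exp (Real.sqrt N/2) := by
        rw [← Real.exp_nat_mul]; ring_nf
      calc (Real.sqrt N / 8 + 1)^4 ≤ Real.exp (Real.sqrt N/8)^4 :=
            pow_le_pow_left₀ (by positivity) h8 4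
        _ = Real.exp (Real.sqrt N/2) := he4
    have hN2grow : (N:ℝ)^2 / 4096 ≤ Real.exp (Real.sqrt N / 2) := by
      nlinarith [sq_nonneg (Real.sqrt N), sq_nonneg (Real.sqrt N / 8 + 1),
        sq_nonneg (Real.sqrt N / 8)]
    have hNbound : Real.exp (-(Real.sqrt N/2)) ≤ 4096 / (N:ℝ)^2 := by
      rw [Real.exp_neg, inv_le_comm₀ (Real.exp_pos _) (by positivity)]
      calc (4096 / (N:ℝ)^2)⁻¹ = (N:ℝ)^2/4096 := by field_simp
        _ ≤ Real.exp (Real.sqrt N / 2) := hN2grow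
    have hlogNN : Real.log N + 1 ≤ (N:ℝ) := by
      linarith [Real.log_le_sub_one_of_pos hNpos]
    have hehalf : Real.exp (1/2) ≤ 2 := by
      have h : Real.exp (1/2) * Real.exp (1/2) = Real.exp 1 := by
        rw [← Real.exp_add]; norm_num
      have h4 : Real.exp (1/2) ^ 2 < 2 ^ 2 := by
        rw [sq, h]
        norm_num
        linarith [Real.exp_one_lt_d9]
      exact (lt_of_pow_lt_pow_left₀ 2 (by norm_num) h4).le
    have hLHSp : (1-q)^((N:ℝ)/2-1) ≤ 2 * (4096 / (N:ℝ)^2) := by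
      calc (1-q)^((N:ℝ)/2-1) ≤ Real.exp (-(q * ((N:ℝ)/2 - 1))) := key
        _ ≤ Real.exp (1/2) * Real.exp (-(Real.sqrt N/2)) := hexpbound
        _ ≤ 2 * (4096 / (N:ℝ)^2) :=
            mul_le_mul hehalf hNbound (Real.exp_pos (-(Real.sqrt N/2))).le
              (by norm_num : (0:ℝ) ≤ 2)
    have hfinal : (1-q)^((N:ℝ)/2-1) * (Real.log N + 1) ≤
        2 * (4096 / (N:ℝ)^2) * (N:ℝ) :=
      mul_le_mul hLHSp hlogNN (by linarith) (by positivity)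
    have h1 : 2 * (4096 / (N:ℝ)^2) * (N:ℝ) = 8192 / (N:ℝ) := by
      field_simp; ring
    have h2 : (8192:ℝ) / (N:ℝ) ≤ 8192 / 3 :=
      div_le_div_of_nonneg_left (by norm_num) (by norm_num) hN3
    have h3 : (8192:ℝ)/3 ≤ 10000 * Real.log (1/q) := by linarith
    rw [h1] at hfinal
    linarith
end

section
/- Let (p_i)_{i∈ℕ} be a monotonically decreasing sequence of reals with 0 < p_i < 1 for all i, which is summable with Σ := ∑_{i=1}^{∞} p_i < 1. Then for every n ∈ ℕ: T_LO(p_1,…,p_n) ≤ n/(2 p_n (1 − Σ)). -/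
/-!
Each of the `n` summands of `T_LO` is at most `1/(2 p_n (1 - Σ))`: monotonicity gives
`p_n ≤ p_i`, and the Weierstrass product inequality `∏ (1 - p_j) ≥ 1 - ∑ p_j`, together with
the partial sums being at most `Σ`, bounds every product of the factors `1 - p_j` below by `1 - Σ`.
-/

open Finset

theorem Finset.one_sub_sum_le_prod_one_sub {ι R : Type*} [CommRing R] [LinearOrder R]
    [IsStrictOrderedRing R] (s : Finset ι) (f : ι → R) (hf : ∀ j ∈ s, 0 ≤ f j ∧ f j ≤ 1) :
    1 - ∑ j ∈ s, f j ≤ ∏ j ∈ s, (1 - f j) := by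
  induction s using Finset.cons_induction with
  | empty => simp
  | cons a s _ ih =>
    rw [sum_cons, prod_cons]
    obtain ⟨ha0, ha1⟩ := hf a (mem_cons_self a s)
    have hs := ih fun j hj => hf j (mem_cons_of_mem hj)
    have hsum_nonneg : 0 ≤ ∑ j ∈ s, f j := sum_nonneg fun j hj => (hf j (mem_cons_of_mem hj)).1
    nlinarith

theorem sum_Ico_one_le_tsum_succ {f : ℕ → ℝ} (hf : ∀ j, 1 ≤ j → 0 ≤ f j)
    (hsum : Summable fun j => f (j + 1)) (i : ℕ) :
    ∑ j ∈ Ico 1 i, f j ≤ ∑' j, f (j + 1) := by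
  rw [sum_Ico_eq_sum_range]
  simp_rw [add_comm 1]
  exact hsum.sum_le_tsum _ fun j _ => hf (j + 1) (Nat.le_add_left 1 j)

theorem one_sub_tsum_succ_le_prod_Ico {f : ℕ → ℝ} (hf : ∀ j, 1 ≤ j → 0 ≤ f j ∧ f j ≤ 1)
    (hsum : Summable fun j => f (j + 1)) (i : ℕ) :
    1 - ∑' j, f (j + 1) ≤ ∏ j ∈ Ico 1 i, (1 - f j) :=
  calc 1 - ∑' j, f (j + 1) ≤ 1 - ∑ j ∈ Ico 1 i, f j :=
        sub_le_sub_left (sum_Ico_one_le_tsum_succ (fun j hj => (hf j hj).1) hsum i) 1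
    _ ≤ ∏ j ∈ Ico 1 i, (1 - f j) :=
        (Ico 1 i).one_sub_sum_le_prod_one_sub f fun j hj => hf j (mem_Ico.mp hj).1

/-- Theorem 4.6: for a monotonically decreasing summable sequence of mutation
probabilities with `Σ = ∑_{i=1}^∞ p_i < 1`, for every `n` the LeadingOnes run time
satisfies `T_LO(p_1,…,p_n) ≤ n/(2 p_n (1 − Σ))`. -/
theorem stmt12 (p : ℕ → ℝ)
    (hp : ∀ i : ℕ, 1 ≤ i → 0 < p i ∧ p i < 1)
    (hmono : ∀ i : ℕ, 1 ≤ i → p (i + 1) ≤ p i)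
    (hsum : Summable (fun i : ℕ => p (i + 1)))
    (hSigma : (∑' i : ℕ, p (i + 1)) < 1) :
    ∀ n : ℕ, 1 ≤ n →
      TLO n p ≤ (n : ℝ) / (2 * p n * (1 - ∑' i : ℕ, p (i + 1))) := by
  intro n hn
  set S := ∑' i : ℕ, p (i + 1)
  have hanti : AntitoneOn p {i | 1 ≤ i} := antitoneOn_nat_Ici_of_succ_le hmono
  have hprod : ∀ i, 1 - S ≤ ∏ j ∈ Ico 1 i, (1 - p j) :=
    one_sub_tsum_succ_le_prod_Ico (fun j hj => ⟨(hp j hj).1.le, (hp j hj).2.le⟩) hsum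
  have hterm : ∀ i ∈ Icc 1 n,
      1 / (2 * p i * ∏ j ∈ Ico 1 i, (1 - p j)) ≤ 1 / (2 * p n * (1 - S)) := by
    intro i hi
    obtain ⟨hi1, hin⟩ := mem_Icc.mp hi
    have hpi := (hp i hi1).1
    have hpn := (hp n hn).1
    have hS : 0 < 1 - S := sub_pos.mpr hSigma
    gcongr
    · exact hanti hi1 hn hin
    · exact hprod i
  calc TLO n p ≤ #(Icc 1 n) • (1 / (2 * p n * (1 - S))) := sum_le_card_nsmul _ _ _ hterm
    _ = n / (2 * p n * (1 - S)) := by rw [Nat.card_Icc, nsmul_eq_mul, mul_one_div]; simp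
end

section
/- For every real ε > 0 there exist a sequence (p_i)_{i∈ℕ} of reals with 0 < p_i < 1 for all i and a constant C > 0 such that for all integers n ≥ 2: T_LO(p_1,…,p_n) ≤ C · n² · (ln n)^{1+ε}. -/
/-!
Take `p j = a / ((j + 1) log (j + 1))` with `a = min (ε / 2) (log 2)`, so that `p j ≤ 1/2`.
Since `1 - x ≥ exp (-2x)` for `x ≤ 1/2`, every product `∏_{j<i} (1 - p j)` is at least
`exp (-2 ∑_{j<n} p j)`, and the sum of the `p j` telescopes against `log log`, so it is at most
`1/2 + a log (log n / log 2)`. Hence the products cost only a factor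
`e (log n / log 2) ^ (2a) ≤ e (log n / log 2) ^ ε`, while `∑_{i ≤ n} 1 / (2 p i) ≤ 2 n² log n / a`.
-/

open Real Finset

lemma Real.exp_neg_two_mul_le_one_sub {x : ℝ} (hx₀ : 0 ≤ x) (hx : x ≤ 1 / 2) :
    exp (-(2 * x)) ≤ 1 - x := by
  have hpos : 0 < 1 + 2 * x := by linarith
  calc exp (-(2 * x)) ≤ (1 + 2 * x)⁻¹ := by
        rw [exp_neg]
        exact inv_anti₀ hpos (by linarith [add_one_le_exp (2 * x)])
    _ ≤ 1 - x := by
        rw [inv_le_iff_one_le_mul₀ hpos]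
        nlinarith

lemma Real.exp_neg_two_mul_sum_le_prod_one_sub {ι : Type*} {s : Finset ι} {f : ι → ℝ}
    (hf₀ : ∀ i ∈ s, 0 ≤ f i) (hf : ∀ i ∈ s, f i ≤ 1 / 2) :
    exp (-(2 * ∑ i ∈ s, f i)) ≤ ∏ i ∈ s, (1 - f i) := by
  rw [mul_sum, ← sum_neg_distrib, exp_sum]
  exact prod_le_prod (fun i _ => (exp_pos _).le)
    fun i hi => exp_neg_two_mul_le_one_sub (hf₀ i hi) (hf i hi)

lemma TLO_le_exp_mul_sum {n : ℕ} {p : ℕ → ℝ} (hp₀ : ∀ i ∈ Icc 1 n, 0 < p i)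
    (hp : ∀ i ∈ Icc 1 n, p i ≤ 1 / 2) :
    TLO n p ≤ exp (2 * ∑ j ∈ Ico 1 n, p j) * ∑ i ∈ Icc 1 n, 1 / (2 * p i) := by
  have hIco : ∀ {i}, i ∈ Icc 1 n → Ico 1 i ⊆ Ico 1 n := fun hi =>
    Ico_subset_Ico le_rfl (mem_Icc.1 hi).2
  have hIco_Icc : Ico 1 n ⊆ Icc 1 n := Ico_subset_Icc_self
  rw [TLO, mul_sum]
  refine sum_le_sum fun i hi => ?_
  have hprod : exp (-(2 * ∑ j ∈ Ico 1 n, p j)) ≤ ∏ j ∈ Ico 1 i, (1 - p j) := by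
    calc exp (-(2 * ∑ j ∈ Ico 1 n, p j)) ≤ exp (-(2 * ∑ j ∈ Ico 1 i, p j)) := by
          gcongr
          · exact fun j hj _ => (hp₀ j (hIco_Icc hj)).le
          · exact (mem_Icc.1 hi).2
      _ ≤ ∏ j ∈ Ico 1 i, (1 - p j) := exp_neg_two_mul_sum_le_prod_one_sub
          (fun j hj => (hp₀ j (hIco_Icc (hIco hi hj))).le)
          (fun j hj => hp j (hIco_Icc (hIco hi hj)))
  have hpi := hp₀ i hi
  calc 1 / (2 * p i * ∏ j ∈ Ico 1 i, (1 - p j))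
      ≤ 1 / (2 * p i * exp (-(2 * ∑ j ∈ Ico 1 n, p j))) := by gcongr
    _ = exp (2 * ∑ j ∈ Ico 1 n, p j) * (1 / (2 * p i)) := by
        rw [exp_neg]
        field_simp

lemma Real.one_sub_div_le_log_sub_log {x y : ℝ} (hx : 0 < x) (hy : 0 < y) :
    1 - x / y ≤ log y - log x := by
  simpa [log_div hy.ne' hx.ne'] using one_sub_inv_le_log_of_pos (div_pos hy hx)

lemma Real.inv_mul_log_le_log_log_sub {x : ℝ} (hx : 1 < x) :
    1 / ((x + 1) * log (x + 1)) ≤ log (log (x + 1)) - log (log x) := by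
  have hlx : 0 < log x := log_pos hx
  have hlx1 : 0 < log (x + 1) := log_pos (by linarith)
  have hstep : 1 / (x + 1) ≤ log (x + 1) - log x := by
    have := one_sub_div_le_log_sub_log (by linarith : 0 < x) (by linarith : 0 < x + 1)
    rwa [one_sub_div (by linarith), add_sub_cancel_left] at this
  calc 1 / ((x + 1) * log (x + 1)) = 1 / (x + 1) / log (x + 1) := by rw [div_div]
    _ ≤ (log (x + 1) - log x) / log (x + 1) := by gcongr
    _ = 1 - log x / log (x + 1) := by rw [sub_div, div_self hlx1.ne']
    _ ≤ log (log (x + 1)) - log (log x) := one_sub_div_le_log_sub_log hlx hlx1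

lemma sum_Ico_inv_mul_log_le {m n : ℕ} (hm : 2 ≤ m) (hmn : m ≤ n) :
    ∑ j ∈ Ico m n, 1 / (((j : ℝ) + 1) * log ((j : ℝ) + 1)) ≤ log (log n) - log (log m) := by
  induction n, hmn using Nat.le_induction with
  | base => simp
  | succ n hmn ih =>
    have hn : (1 : ℝ) < n := by exact_mod_cast (by omega : 1 < n)
    rw [sum_Ico_succ_top hmn]
    push_cast
    linarith [inv_mul_log_le_log_log_sub hn]

noncomputable def mutationRate (a : ℝ) (j : ℕ) : ℝ := a / ((j + 1) * log (j + 1))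

section mutationRate

variable {a : ℝ}

lemma two_mul_log_two_le_mul_log {j : ℕ} (hj : 1 ≤ j) :
    2 * log 2 ≤ ((j : ℝ) + 1) * log ((j : ℝ) + 1) := by
  have hj' : (1 : ℝ) ≤ j := by exact_mod_cast hj
  have : log 2 ≤ log ((j : ℝ) + 1) := log_le_log (by norm_num) (by linarith)
  nlinarith [log_pos (by norm_num : (1 : ℝ) < 2)]

lemma mutationRate_pos (ha : 0 < a) {j : ℕ} (hj : 1 ≤ j) : 0 < mutationRate a j :=
  div_pos ha <| (mul_pos two_pos (log_pos (by norm_num))).trans_le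
    (two_mul_log_two_le_mul_log hj)

lemma mutationRate_le_half (ha₀ : 0 ≤ a) (ha : a ≤ log 2) {j : ℕ} (hj : 1 ≤ j) :
    mutationRate a j ≤ 1 / 2 := by
  have hl2 : 0 < log 2 := log_pos (by norm_num)
  calc mutationRate a j ≤ a / (2 * log 2) := by
        unfold mutationRate
        exact div_le_div_of_nonneg_left ha₀ (by positivity) (two_mul_log_two_le_mul_log hj)
    _ ≤ 1 / 2 := by
        rw [div_le_iff₀ (by positivity)]
        linarith

lemma sum_mutationRate_le (ha₀ : 0 ≤ a) (ha : a ≤ log 2) {n : ℕ} (hn : 2 ≤ n) :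
    ∑ j ∈ Ico 1 n, mutationRate a j ≤ 1 / 2 + a * (log (log n) - log (log 2)) := by
  rw [sum_eq_sum_Ico_succ_bot (by omega : 1 < n)]
  have htail : ∑ j ∈ Ico 2 n, mutationRate a j ≤ a * (log (log n) - log (log 2)) := by
    simp_rw [mutationRate, div_eq_mul_one_div a, ← mul_sum]
    gcongr
    exact_mod_cast sum_Ico_inv_mul_log_le le_rfl hn
  linarith [mutationRate_le_half ha₀ ha le_rfl]

lemma exp_two_mul_sum_mutationRate_le (ha₀ : 0 ≤ a) (ha : a ≤ log 2) {n : ℕ} (hn : 2 ≤ n) :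
    exp (2 * ∑ j ∈ Ico 1 n, mutationRate a j) ≤ exp 1 * (log n / log 2) ^ (2 * a) := by
  have hl2 : 0 < log 2 := log_pos (by norm_num)
  have hln : 0 < log n := log_pos (by exact_mod_cast (by omega : 1 < n))
  rw [rpow_def_of_pos (div_pos hln hl2), log_div hln.ne' hl2.ne', ← exp_add, exp_le_exp]
  nlinarith [sum_mutationRate_le ha₀ ha hn]

lemma sum_inv_two_mul_mutationRate_le (ha : 0 < a) {n : ℕ} (hn : 2 ≤ n) :
    ∑ i ∈ Icc 1 n, 1 / (2 * mutationRate a i) ≤ 2 * n ^ 2 * log n / a := by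
  have hn' : (2 : ℝ) ≤ n := by exact_mod_cast hn
  have hlog : log ((n : ℝ) + 1) ≤ 2 * log n := by
    rw [← Nat.cast_ofNat, ← log_pow]
    exact log_le_log (by positivity) (by nlinarith)
  have hterm : ∀ i ∈ Icc 1 n, 1 / (2 * mutationRate a i) ≤ 2 * n * log n / a := by
    intro i hi
    obtain ⟨hi1, hin⟩ := mem_Icc.1 hi
    have hi1' : (1 : ℝ) ≤ i := by exact_mod_cast hi1
    have hin' : (i : ℝ) ≤ n := by exact_mod_cast hin
    calc 1 / (2 * mutationRate a i) = ((i : ℝ) + 1) * log ((i : ℝ) + 1) / (2 * a) := by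
          unfold mutationRate
          field_simp
      _ ≤ ((n : ℝ) + 1) * log ((n : ℝ) + 1) / (2 * a) := by
          gcongr
          exact log_nonneg (by linarith)
      _ ≤ (2 * n) * (2 * log n) / (2 * a) := by
          gcongr
          · exact log_nonneg (by linarith)
          · linarith
      _ = 2 * n * log n / a := by field_simp
  calc ∑ i ∈ Icc 1 n, 1 / (2 * mutationRate a i) ≤ #(Icc 1 n) • (2 * n * log n / a) :=
        sum_le_card_nsmul _ _ _ hterm
    _ = 2 * n ^ 2 * log n / a := by
        rw [Nat.card_Icc, add_tsub_cancel_right, nsmul_eq_mul]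
        ring

end mutationRate

/-- LeadingOnes part of Corollary 4.7: for every `ε > 0` there is a single sequence
of mutation probabilities such that for all `n ≥ 2` the expected run time on
LeadingOnes_n is at most `C · n² · (ln n)^{1+ε}`. -/
theorem stmt16 (ε : ℝ) (hε : 0 < ε) :
    ∃ p : ℕ → ℝ, (∀ i : ℕ, 1 ≤ i → 0 < p i ∧ p i < 1) ∧
      ∃ C : ℝ, 0 < C ∧ ∀ n : ℕ, 2 ≤ n →
        TLO n p ≤ C * (n : ℝ) ^ 2 * Real.log n ^ (1 + ε) := by
  set a := min (ε / 2) (log 2)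
  have hl2 : 0 < log 2 := log_pos (by norm_num)
  have ha₀ : 0 < a := lt_min (by linarith) hl2
  have ha : a ≤ log 2 := min_le_right _ _
  have h2a : 2 * a ≤ ε := by linarith [min_le_left (ε / 2) (log 2)]
  refine ⟨mutationRate a, fun i hi => ⟨mutationRate_pos ha₀ hi,
    (mutationRate_le_half ha₀.le ha hi).trans_lt (by norm_num)⟩,
    2 * exp 1 / (a * log 2 ^ ε), by positivity, fun n hn => ?_⟩
  have hln : 0 < log n := log_pos (by exact_mod_cast (by omega : 1 < n))
  have hratio : 1 ≤ log n / log 2 := by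
    rw [one_le_div hl2]
    exact log_le_log two_pos (by exact_mod_cast hn)
  have hexp : exp (2 * ∑ j ∈ Ico 1 n, mutationRate a j) ≤ exp 1 * (log n / log 2) ^ ε :=
    (exp_two_mul_sum_mutationRate_le ha₀.le ha hn).trans <| by gcongr
  have hpos : ∀ i ∈ Icc 1 n, 0 < mutationRate a i :=
    fun i hi => mutationRate_pos ha₀ (mem_Icc.1 hi).1
  calc TLO n (mutationRate a) ≤ exp (2 * ∑ j ∈ Ico 1 n, mutationRate a j) *
        ∑ i ∈ Icc 1 n, 1 / (2 * mutationRate a i) :=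
        TLO_le_exp_mul_sum hpos fun i hi => mutationRate_le_half ha₀.le ha (mem_Icc.1 hi).1
    _ ≤ (exp 1 * (log n / log 2) ^ ε) * (2 * n ^ 2 * log n / a) :=
        mul_le_mul hexp (sum_inv_two_mul_mutationRate_le ha₀ hn)
          (sum_nonneg fun i hi => (one_div_pos.2 (mul_pos two_pos (hpos i hi))).le)
          (by positivity)
    _ = 2 * exp 1 / (a * log 2 ^ ε) * n ^ 2 * log n ^ (1 + ε) := by
        rw [div_rpow hln.le hl2.le, rpow_add hln, rpow_one]
        field_simp
end
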